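/- Let X = Bool (a two-element type), n = 2, and let ε = ε₁ˢ and δ = ε₂ˢ be the first and second strict dominance selection functions on X, with outcome semilattice R equal to the nonempty finite subsets of ℝ² ordered by inclusion with join given by union. Then the product ε ⊗ δ, as a multi-valued selection function on X × X, is not witnessing. -/
import Mathlib


universe u

/-- A multi-valued selection function on `X` with outcomes in `R`:
a map `(X → R) → Finset X` whose values are all nonempty. -/
structure Sel (R X : Type u) [SemilatticeSup R] : Type u where
  fn : (X → R) → Finset X
  ne : ∀ k, (fn k).Nonempty

variable {R : Type u} [SemilatticeSup R]

/-- A selection function is witnessing if whenever `x` is selected in the context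
obtained by taking pointwise joins over an indexing function `I`, there is a choice
function `p` for `I` in whose induced context `x` is also selected. -/
def Witnessing {X : Type u} (ε : Sel R X) : Prop :=
  ∀ (I : X → Finset (X → R)) (hI : ∀ x, (I x).Nonempty) (x : X),
    x ∈ ε.fn (fun x' => (I x').sup' (hI x') (fun P => P x')) →
      ∃ p : X → X → R, (∀ x', p x' ∈ I x') ∧ x ∈ ε.fn (fun x' => p x' x')

/-- A selection function is upwards closed if whenever `x` is selected in the context
induced by a choice function `p` for an indexing function `I`, then `x` is also selected
in the context obtained by taking pointwise joins over `I`. -/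
def UpwardsClosed {X : Type u} (ε : Sel R X) : Prop :=
  ∀ (I : X → Finset (X → R)) (hI : ∀ x, (I x).Nonempty) (p : X → X → R),
    (∀ x', p x' ∈ I x') → ∀ x, x ∈ ε.fn (fun x' => p x' x') →
      x ∈ ε.fn (fun x' => (I x').sup' (hI x') (fun P => P x'))

/-- The product of selection functions. -/
def Sel.prod {X Y : Type u} (ε : Sel R X) (δ : Sel R Y) : Sel R (X × Y) where
  fn q :=
    ((ε.fn (fun x => (δ.fn (fun y => q (x, y))).sup' (δ.ne _) (fun y => q (x, y)))).sigma
      (fun x => δ.fn (fun y => q (x, y)))).map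
      ⟨fun p => (p.1, p.2), fun a b h => by
        cases a; cases b
        simp only [Prod.mk.injEq] at h
        obtain ⟨h1, h2⟩ := h
        subst h1; subst h2; rfl⟩
  ne q := by
    obtain ⟨x, hx⟩ := ε.ne (fun x => (δ.fn (fun y => q (x, y))).sup' (δ.ne _) (fun y => q (x, y)))
    obtain ⟨y, hy⟩ := δ.ne (fun y => q (x, y))
    exact ⟨(x, y), Finset.mem_map.2 ⟨⟨x, y⟩, Finset.mem_sigma.mpr ⟨hx, hy⟩, rfl⟩⟩

/-- A strategy profile `(σ₁, σ₂)` is rational. -/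
def IsRational {X Y : Type u} (ε : Sel R X) (δ : Sel R Y) (q : X × Y → R)
    (σ₁ : X) (σ₂ : X → Y) : Prop :=
  (∃ yf : X → Y, (∀ x, yf x ∈ δ.fn (fun y' => q (x, y'))) ∧
      σ₁ ∈ ε.fn (fun x => q (x, yf x))) ∧
  ∀ x, σ₂ x ∈ δ.fn (fun y' => q (x, y'))

/-- The set of rational plays. -/
def RatPlays {X Y : Type u} (ε : Sel R X) (δ : Sel R Y) (q : X × Y → R) : Set (X × Y) :=
  {p | ∃ σ₁ σ₂, IsRational ε δ q σ₁ σ₂ ∧ p = (σ₁, σ₂ σ₁)}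

/-- Subgame perfect strategy profile. -/
def SubgamePerfect {X Y : Type u} (ε : Sel R X) (δ : Sel R Y) (q : X × Y → R)
    (σ₁ : X) (σ₂ : X → Y) : Prop :=
  σ₁ ∈ ε.fn (fun x => q (x, σ₂ x)) ∧ ∀ x, σ₂ x ∈ δ.fn (fun y => q (x, y))

/-- The set of subgame perfect plays. -/
def SPPlays {X Y : Type u} (ε : Sel R X) (δ : Sel R Y) (q : X × Y → R) : Set (X × Y) :=
  {p | ∃ σ₁ σ₂, SubgamePerfect ε δ q σ₁ σ₂ ∧ p = (σ₁, σ₂ σ₁)}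

/-- The type of nonempty finite subsets of `α`. -/
def NFin (α : Type) : Type := {s : Finset α // s.Nonempty}

/-- `NFin α` is a join-semilattice, ordered by inclusion with join given by union. -/
noncomputable instance (α : Type) : SemilatticeSup (NFin α) :=
  letI := Classical.decEq α
  Subtype.semilatticeSup (fun _ _ hs _ => hs.mono Finset.subset_union_left)

/-- `S` strictly dominates `T` (for nonempty finite sets of reals) if `min S > max T`. -/
def SDom (S T : NFin ℝ) : Prop :=
  T.1.max' T.2 < S.1.min' S.2

/-- The image of a nonempty finite subset of `ℝⁿ` under the `i`-th projection. -/
noncomputable def projI {n : ℕ} (i : Fin n) (S : NFin (Fin n → ℝ)) : NFin ℝ :=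
  ⟨S.1.image (fun v => v i), S.2.image _⟩

open scoped Classical in
/-- The `i`-th strict dominance selection function:
`ε_iˢ (p) = {x | ∀ x', ¬ (pⁱ x' ≻ pⁱ x)}`. -/
noncomputable def sdSel {n : ℕ} (i : Fin n) (X : Type) [Fintype X]
    (p : X → NFin (Fin n → ℝ)) : Finset X :=
  Finset.univ.filter (fun x => ∀ x' : X, ¬ SDom (projI i (p x')) (projI i (p x)))

/-- The strict dominance selection functions have nonempty values. -/
theorem sdSel_nonempty {n : ℕ} (i : Fin n) (X : Type) [Fintype X] [Nonempty X]
    (p : X → NFin (Fin n → ℝ)) : (sdSel i X p).Nonempty := by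
  classical
  obtain ⟨x, -, hx⟩ := Finset.exists_max_image (Finset.univ : Finset X)
    (fun x => (projI i (p x)).1.max' (projI i (p x)).2) Finset.univ_nonempty
  refine ⟨x, Finset.mem_filter.2 ⟨Finset.mem_univ _, fun x' h => ?_⟩⟩
  have h1 : (projI i (p x')).1.min' (projI i (p x')).2 ≤
      (projI i (p x')).1.max' (projI i (p x')).2 :=
    Finset.min'_le _ _ (Finset.max'_mem _ _)
  have h2 := hx x' (Finset.mem_univ _)
  exact absurd h (by simp only [SDom]; linarith)

/-- The `i`-th strict dominance selection function on `Bool`, bundled with the proof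
that its values are nonempty. -/
noncomputable def sdSelBool (i : Fin 2) : Sel (NFin (Fin 2 → ℝ)) Bool :=
  ⟨sdSel i Bool, sdSel_nonempty i Bool⟩

section Aux
variable {R : Type u} [SemilatticeSup R]

lemma NFin.mem_sup {α : Type} (a b : NFin α) (x : α) :
    x ∈ (a ⊔ b).1 ↔ x ∈ a.1 ∨ x ∈ b.1 := by
  classical
  show x ∈ a.1 ∪ b.1 ↔ _
  rw [Finset.mem_union]

lemma NFin.mem_sup' {α β : Type} (s : Finset β) (h : s.Nonempty) (f : β → NFin α) (x : α) :
    x ∈ (s.sup' h f).1 ↔ ∃ b ∈ s, x ∈ (f b).1 := by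
  induction h using Finset.Nonempty.cons_induction with
  | singleton a => simp
  | cons a s ha hs ih => rw [Finset.sup'_cons hs, NFin.mem_sup, ih]; simp

lemma sdom_proj_iff {n : ℕ} (i : Fin n) (S T : NFin (Fin n → ℝ)) :
    SDom (projI i S) (projI i T) ↔ ∀ t ∈ T.1, ∀ s ∈ S.1, t i < s i := by
  simp only [SDom, Finset.max'_lt_iff, Finset.lt_min'_iff, projI]
  constructor
  · intro h t ht s hs
    exact h (s i) (Finset.mem_image_of_mem _ hs) (t i) (Finset.mem_image_of_mem _ ht)
  · intro h s hs t ht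
    obtain ⟨v, hv, rfl⟩ := Finset.mem_image.1 hs
    obtain ⟨w, hw, rfl⟩ := Finset.mem_image.1 ht
    exact h w hw v hv

lemma mem_sdSel_iff {n : ℕ} (i : Fin n) (X : Type) [Fintype X]
    (p : X → NFin (Fin n → ℝ)) (x : X) :
    x ∈ sdSel i X p ↔ ∀ x', ¬ SDom (projI i (p x')) (projI i (p x)) := by
  classical
  simp [sdSel]

lemma Sel.mem_prod_fn {X Y : Type u} (ε : Sel R X) (δ : Sel R Y) (q : X × Y → R)
    (x : X) (y : Y) :
    (x, y) ∈ (ε.prod δ).fn q ↔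
      (x ∈ ε.fn (fun x => (δ.fn (fun y => q (x, y))).sup' (δ.ne _) (fun y => q (x, y))) ∧
        y ∈ δ.fn (fun y => q (x, y))) := by
  constructor
  · intro h
    obtain ⟨⟨a, b⟩, hab, heq⟩ := Finset.mem_map.1 h
    obtain ⟨h1, h2⟩ := Finset.mem_sigma.1 hab
    obtain ⟨rfl, rfl⟩ := heq
    exact ⟨h1, h2⟩
  · intro ⟨h1, h2⟩
    exact Finset.mem_map.2 ⟨⟨x, y⟩, Finset.mem_sigma.2 ⟨h1, h2⟩, rfl⟩

/-- A point of `ℝ²` as a singleton in `NFin (Fin 2 → ℝ)`. -/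
noncomputable def vpt (a b : ℝ) : NFin (Fin 2 → ℝ) :=
  ⟨{![a, b]}, Finset.singleton_nonempty _⟩

noncomputable def Qex1 : Bool × Bool → NFin (Fin 2 → ℝ) := fun z =>
  match z with
  | (false, false) => vpt 2 0
  | (false, true) => vpt 0 1
  | (true, _) => vpt 1 1

noncomputable def Qex2 : Bool × Bool → NFin (Fin 2 → ℝ) := fun z =>
  match z with
  | (false, false) => vpt 0 2
  | (false, true) => vpt 0 1
  | (true, _) => vpt 1 1

end Aux

/-- With `X = Bool` and `n = 2`, the product `ε₁ˢ ⊗ ε₂ˢ` of the first and second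
strict dominance selection functions, as a multi-valued selection function on
`X × X` with outcomes in the nonempty finite subsets of `ℝ²`, is not witnessing. -/
theorem sdSel_prod_not_witnessing :
    ¬ Witnessing ((sdSelBool 0).prod (sdSelBool 1)) := by
  intro hW
  letI : DecidableEq ((Bool × Bool) → NFin (Fin 2 → ℝ)) := Classical.decEq _
  set I : Bool × Bool → Finset ((Bool × Bool) → NFin (Fin 2 → ℝ)) :=
    fun _ => {Qex1, Qex2} with hIdef
  have hI : ∀ z, (I z).Nonempty := fun _ => ⟨Qex1, Finset.mem_insert_self _ _⟩
  set k : Bool × Bool → NFin (Fin 2 → ℝ) :=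
    fun z => (I z).sup' (hI z) (fun P => P z) with hkdef
  -- membership facts about k
  have hmemk : ∀ z x, x ∈ (k z).1 ↔ x ∈ (Qex1 z).1 ∨ x ∈ (Qex2 z).1 := by
    intro z x
    rw [hkdef, NFin.mem_sup' (α := Fin 2 → ℝ)]
    constructor
    · rintro ⟨P, hP, hx⟩
      rcases Finset.mem_insert.1 hP with rfl | hP
      · exact Or.inl hx
      · rw [Finset.mem_singleton.1 hP] at hx; exact Or.inr hx
    · rintro (hx | hx)
      · exact ⟨Qex1, Finset.mem_insert_self _ _, hx⟩
      · exact ⟨Qex2, Finset.mem_insert.2 (Or.inr (Finset.mem_singleton_self _)), hx⟩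
  have hvpt : ∀ (a b : ℝ) (x : Fin 2 → ℝ), x ∈ (vpt a b).1 ↔ x = ![a, b] := by
    intro a b x; simp [vpt]
  -- the δ-part of the joined-context membership
  have hδJ : false ∈ (sdSelBool 1).fn (fun y => k (false, y)) := by
    rw [show (sdSelBool 1).fn = sdSel 1 Bool from rfl, mem_sdSel_iff]
    intro b' hS
    rw [sdom_proj_iff] at hS
    have ht : (![0, 2] : Fin 2 → ℝ) ∈ (k (false, false)).1 := by
      rw [hmemk]; right; rw [show Qex2 (false, false) = vpt 0 2 from rfl, hvpt]
    cases b' with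
    | false =>
      have hs : (![2, 0] : Fin 2 → ℝ) ∈ (k (false, false)).1 := by
        rw [hmemk]; left; rw [show Qex1 (false, false) = vpt 2 0 from rfl, hvpt]
      have := hS _ ht _ hs
      norm_num at this
    | true =>
      have hs : (![0, 1] : Fin 2 → ℝ) ∈ (k (false, true)).1 := by
        rw [hmemk]; left; rw [show Qex1 (false, true) = vpt 0 1 from rfl, hvpt]
      have := hS _ ht _ hs
      norm_num at this
  -- joined-context membership
  have hmem : ((false, false) : Bool × Bool) ∈
      ((sdSelBool 0).prod (sdSelBool 1)).fn k := by
    rw [Sel.mem_prod_fn]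
    refine ⟨?_, hδJ⟩
    rw [show (sdSelBool 0).fn = sdSel 0 Bool from rfl, mem_sdSel_iff]
    intro x' hS
    rw [sdom_proj_iff] at hS
    have ht : (![2, 0] : Fin 2 → ℝ) ∈
        (((sdSelBool 1).fn (fun y => k (false, y))).sup' ((sdSelBool 1).ne _)
          (fun y => k (false, y))).1 := by
      rw [NFin.mem_sup' (α := Fin 2 → ℝ)]
      refine ⟨false, hδJ, ?_⟩
      rw [hmemk]; left; rw [show Qex1 (false, false) = vpt 2 0 from rfl, hvpt]
    cases x' with
    | false =>
      have := hS _ ht _ ht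
      norm_num at this
    | true =>
      obtain ⟨b, hb⟩ := (sdSelBool 1).ne (fun y => k (true, y))
      have hs : (![1, 1] : Fin 2 → ℝ) ∈
          (((sdSelBool 1).fn (fun y => k (true, y))).sup' ((sdSelBool 1).ne _)
            (fun y => k (true, y))).1 := by
        rw [NFin.mem_sup' (α := Fin 2 → ℝ)]
        refine ⟨b, hb, ?_⟩
        rw [hmemk]; left
        rw [show Qex1 (true, b) = vpt 1 1 from rfl, hvpt]
      have := hS _ ht _ hs
      norm_num at this
  obtain ⟨p, hp, hsel⟩ := hW I hI (false, false) hmem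
  rw [Sel.mem_prod_fn] at hsel
  obtain ⟨hε, hδ⟩ := hsel
  -- values of the induced context away from (false, false)
  have hqval : ∀ z, p z z = Qex1 z ∨ p z z = Qex2 z := by
    intro z
    have h := hp z
    rw [hIdef] at h
    rcases Finset.mem_insert.1 h with h | h
    · exact Or.inl (congrFun h z)
    · exact Or.inr (congrFun (Finset.mem_singleton.1 h) z)
  have hq01 : p (false, true) (false, true) = vpt 0 1 := by
    rcases hqval (false, true) with h | h <;> rw [h] <;> rfl
  have hq11 : ∀ b, p (true, b) (true, b) = vpt 1 1 := by
    intro b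
    rcases hqval (true, b) with h | h <;> rw [h] <;> rfl
  rcases hqval (false, false) with hq00 | hq00
  · -- q (false,false) = vpt 2 0 : contradiction with hδ
    rw [show Qex1 (false, false) = vpt 2 0 from rfl] at hq00
    rw [show (sdSelBool 1).fn = sdSel 1 Bool from rfl, mem_sdSel_iff] at hδ
    apply hδ true
    rw [sdom_proj_iff]
    intro t ht s hs
    rw [hq00, hvpt] at ht
    rw [hq01, hvpt] at hs
    subst ht; subst hs
    norm_num
  · -- q (false,false) = vpt 0 2 : contradiction with hε
    rw [show Qex2 (false, false) = vpt 0 2 from rfl] at hq00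
    rw [show (sdSelBool 0).fn = sdSel 0 Bool from rfl, mem_sdSel_iff] at hε
    apply hε true
    rw [sdom_proj_iff]
    intro t ht s hs
    rw [NFin.mem_sup' (α := Fin 2 → ℝ)] at ht hs
    obtain ⟨b, -, ht⟩ := ht
    obtain ⟨b', -, hs⟩ := hs
    rw [hq11 b', hvpt] at hs
    subst hs
    have ht0 : t 0 = 0 := by
      cases b with
      | false => rw [hq00, hvpt] at ht; subst ht; norm_num
      | true => rw [hq01, hvpt] at ht; subst ht; norm_num
    rw [ht0]
    norm_num
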